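/- (Sufficiency part of Theorem 3.1) Let 1 < q < ∞, λ ∈ (-1/q, 0), γ > -Q, ω(x) = |x|_h^γ, and Ω ∈ L^{q'}(S_{Q-1}). If C_1 = ∫_0^∞ Φ(t) t^{-1-(Q+γ)λ} dt < ∞, then the rough Hausdorff operator H_{Φ,Ω} f(x) = ∫_0^∞ ∫_{S_{Q-1}} (Φ(t)/t) Ω(y') f(δ_{t^{-1}|x|_h} y') dσ(y') dt is bounded on the weighted central Morrey space Ḃ^{q,λ}_ω(H^n), with operator norm ≲ C_1 ‖Ω‖_{L^{q'}(S_{Q-1})}. -/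

import Mathlib

open MeasureTheory ENNReal Set

noncomputable section

/-- Heisenberg dilation: scales the first `2n` coordinates by `r` and the last by `r²`. -/
def dil (n : ℕ) (r : ℝ) (x : Fin (2*n+1) → ℝ) : Fin (2*n+1) → ℝ :=
  fun i => if i.val < 2*n then r * x i else r^2 * x i

/-- Homogeneous (Korányi) norm on the Heisenberg group `Hⁿ = ℝ^{2n+1}`. -/
def hnorm (n : ℕ) (x : Fin (2*n+1) → ℝ) : ℝ :=
  ((∑ i : Fin (2*n+1), if i.val < 2*n then (x i)^2 else (0:ℝ))^2
    + (x ⟨2*n, by omega⟩)^2) ^ ((1:ℝ)/4)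

/-- Closed ball `B_R = {|x|_h ≤ R}`. -/
def hball (n : ℕ) (R : ℝ) : Set (Fin (2*n+1) → ℝ) := {x | hnorm n x ≤ R}

/-- The rough Hausdorff operator on the Heisenberg group. -/
def roughHausdorff (n : ℕ) (Φ : ℝ → ℝ) (Ω : (Fin (2*n+1) → ℝ) → ℂ)
    (σ : Measure (Fin (2*n+1) → ℝ)) (f : (Fin (2*n+1) → ℝ) → ℂ)
    (x : Fin (2*n+1) → ℝ) : ℂ :=
  ∫ t in Ioi (0:ℝ), ∫ y, (Φ t / t) • (Ω y * f (dil n (hnorm n x / t) y)) ∂σ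

/-- Weighted central Morrey norm
`‖f‖ = sup_{R>0} (ω(B_R)^{-(1+λq)} ∫_{B_R} |f|^q ω dx)^{1/q}`, with `ω = |·|_h^γ`,
valued in `ℝ≥0∞`. -/
def morreyNorm (n : ℕ) (q γ lam : ℝ) (f : (Fin (2*n+1) → ℝ) → ℂ) : ℝ≥0∞ :=
  ⨆ (R : ℝ) (_ : 0 < R),
    ((∫⁻ x in hball n R, ENNReal.ofReal (hnorm n x ^ γ)) ^ (-(1 + lam * q)) *
      ∫⁻ x in hball n R, ENNReal.ofReal (‖f x‖ ^ q * hnorm n x ^ γ)) ^ (1/q)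

/-!
Write `P = Q + γ`, `c = Pλ`, `G(s) = ∫_{S_{Q-1}} |f(δ_s y')|^q dσ(y')`. Hölder's inequality on the
sphere gives `|H f(x)| ≤ ‖Ω‖_{q'} ∫_0^∞ Φ(t)/t · G(|x|/t)^{1/q} dt`, and Hölder in `t` against the
weight `t^{-c}` gives `|H f(x)|^q ≤ ‖Ω‖^q C₁^{q-1} ∫_0^∞ Φ(t)/t · t^{c(q-1)} G(|x|/t) dt`.
Integrate over `B_R` against `|x|_h^γ` and swap the integrals. Polar coordinates and the dilation
`δ_t` give `∫_{B_R} G(|x|/t) |x|_h^γ dx = σ(S) t^P ∫_{B_{R/t}} |f|^q |x|_h^γ dx`, which the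
Morrey norm bounds by `σ(S) t^P ω(B_{R/t})^{1+λq} ‖f‖^q`. Since `ω(B_{R/t}) = t^{-P} ω(B_R)`,
all powers of `t` collapse to `t^{-c}`, and the `t`-integral is `C₁` again. This gives
`∫_{B_R} |H f|^q ω ≤ σ(S) (‖Ω‖ C₁ ‖f‖)^q ω(B_R)^{1+λq}`, i.e. the bound with `C = σ(S)^{1/q}`.
-/

lemma hnorm_nonneg (n : ℕ) (x : Fin (2*n+1) → ℝ) : 0 ≤ hnorm n x :=
  Real.rpow_nonneg (by positivity) _

lemma hnorm_zero (n : ℕ) : hnorm n 0 = 0 := by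
  simp [hnorm]

lemma continuous_hnorm (n : ℕ) : Continuous (hnorm n) := by
  refine Continuous.rpow_const ?_ fun _ => Or.inr (by norm_num)
  refine .add (.pow (continuous_finsetSum _ fun i _ => ?_) 2) (by fun_prop)
  split_ifs <;> fun_prop

@[fun_prop] lemma measurable_hnorm (n : ℕ) : Measurable (hnorm n) :=
  (continuous_hnorm n).measurable

lemma measurableSet_hball (n : ℕ) (R : ℝ) : MeasurableSet (hball n R) :=
  measurable_hnorm n measurableSet_Iic

lemma hnorm_dil (n : ℕ) {r : ℝ} (hr : 0 ≤ r) (x : Fin (2*n+1) → ℝ) :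
    hnorm n (dil n r x) = r * hnorm n x := by
  set S := ∑ i : Fin (2*n+1), if i.val < 2*n then (x i)^2 else (0:ℝ)
  have hS : (∑ i : Fin (2*n+1), if i.val < 2*n then (dil n r x i)^2 else (0:ℝ)) = r^2 * S := by
    rw [Finset.mul_sum]
    refine Finset.sum_congr rfl fun i _ => ?_
    unfold dil; split_ifs <;> ring
  have hlast : dil n r x ⟨2*n, by omega⟩ = r^2 * x ⟨2*n, by omega⟩ := by simp [dil]
  have hr4 : r ^ (4:ℝ) = r ^ 4 := Real.rpow_natCast r 4
  rw [hnorm, hnorm, hS, hlast, show (r^2 * S)^2 + (r^2 * x ⟨2*n, by omega⟩)^2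
      = r^4 * (S^2 + x ⟨2*n, by omega⟩ ^ 2) by ring,
    Real.mul_rpow (by positivity) (by positivity), ← hr4, ← Real.rpow_mul hr]
  norm_num [S]

lemma dil_dil (n : ℕ) (a b : ℝ) (y : Fin (2*n+1) → ℝ) : dil n a (dil n b y) = dil n (a * b) y := by
  funext i; unfold dil; split_ifs <;> ring

@[simp] lemma dil_one (n : ℕ) (y : Fin (2*n+1) → ℝ) : dil n 1 y = y := by
  funext i; unfold dil; split_ifs <;> ring

lemma measurable_dil_uncurry (n : ℕ) :
    Measurable fun p : ℝ × (Fin (2*n+1) → ℝ) => dil n p.1 p.2 :=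
  measurable_pi_lambda _ fun i => by unfold dil; split_ifs <;> fun_prop

lemma measurable_dil (n : ℕ) (r : ℝ) : Measurable (dil n r) :=
  (measurable_dil_uncurry n).comp measurable_prodMk_left

lemma measurable_lintegral_dil {n : ℕ} {σ : Measure (Fin (2*n+1) → ℝ)} [SFinite σ]
    {G : (Fin (2*n+1) → ℝ) → ℝ≥0∞} (hG : Measurable G) :
    Measurable fun r => ∫⁻ y, G (dil n r y) ∂σ :=
  (hG.comp (measurable_dil_uncurry n)).lintegral_prod_right'

lemma setLIntegral_hball_eq_lintegral_indicator (n : ℕ) (R : ℝ) (F : ℝ → ℝ≥0∞)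
    (G : (Fin (2*n+1) → ℝ) → ℝ≥0∞) :
    ∫⁻ x in hball n R, F (hnorm n x) * G x = ∫⁻ x, (Iic R).indicator F (hnorm n x) * G x := by
  rw [← lintegral_indicator (measurableSet_hball n R)]
  congr 1; funext x
  by_cases h : hnorm n x ≤ R <;> simp [indicator, hball, h]

lemma sq_le_one_of_hnorm_le_one {n : ℕ} {x : Fin (2*n+1) → ℝ} (hx : hnorm n x ≤ 1)
    (i : Fin (2*n+1)) : x i ^ 2 ≤ 1 := by
  set S := ∑ i : Fin (2*n+1), if i.val < 2*n then (x i)^2 else (0:ℝ)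
  have hS0 : 0 ≤ S := Finset.sum_nonneg fun i _ => by split_ifs <;> positivity
  have hle : S^2 + x ⟨2*n, by omega⟩ ^ 2 ≤ 1 := by
    by_contra h
    exact (Real.one_lt_rpow (not_le.1 h) (by norm_num)).not_ge hx
  by_cases hi : i.val < 2*n
  · have hxS : x i ^ 2 ≤ S := by
      simpa [hi] using Finset.single_le_sum (f := fun j : Fin (2*n+1) =>
        if j.val < 2*n then (x j)^2 else (0:ℝ)) (fun j _ => by positivity) (Finset.mem_univ i)
    nlinarith [sq_nonneg (x ⟨2*n, by omega⟩)]
  · rw [show i = ⟨2*n, by omega⟩ from Fin.ext (by simp only; omega)]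
    nlinarith

lemma hball_one_subset_closedBall (n : ℕ) : hball n 1 ⊆ Metric.closedBall 0 1 := fun x hx => by
  rw [mem_closedBall_zero_iff, pi_norm_le_iff_of_nonneg zero_le_one]
  intro i
  rw [Real.norm_eq_abs, ← sq_le_one_iff_abs_le_one]
  exact sq_le_one_of_hnorm_le_one hx i

lemma volume_hball_one_ne_top (n : ℕ) : volume (hball n 1) ≠ ∞ :=
  (measure_mono (hball_one_subset_closedBall n)).trans_lt measure_closedBall_lt_top |>.ne

lemma volume_hball_one_ne_zero (n : ℕ) : volume (hball n 1) ≠ 0 := by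
  refine (measure_pos_of_superset (s := {x | hnorm n x < 1})
    (fun x (hx : hnorm n x < 1) => hx.le) ?_).ne'
  exact (isOpen_lt (continuous_hnorm n) continuous_const).measure_ne_zero volume
    ⟨0, show hnorm n 0 < 1 by rw [hnorm_zero]; exact zero_lt_one⟩

lemma setLIntegral_Ioi_comp_mul_left {t : ℝ} (ht : 0 < t) (F : ℝ → ℝ≥0∞) :
    ∫⁻ u in Ioi 0, F (t * u) = ENNReal.ofReal t⁻¹ * ∫⁻ r in Ioi 0, F r := by
  have he := measurableEmbedding_mulLeft₀ ht.ne'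
  have hpre : (t * ·) ⁻¹' Ioi (0:ℝ) = Ioi 0 := by ext u; simp [mul_pos_iff_of_pos_left ht]
  calc ∫⁻ u in Ioi 0, F (t * u)
      = ∫⁻ r, F r ∂(Measure.map (t * ·) (volume.restrict ((t * ·) ⁻¹' Ioi 0))) := by
        rw [he.lintegral_map, hpre]
    _ = ENNReal.ofReal t⁻¹ * ∫⁻ r in Ioi 0, F r := by
        rw [← he.restrict_map, Real.map_volume_mul_left ht.ne', Measure.restrict_smul,
          lintegral_smul_measure, abs_of_pos (inv_pos.2 ht), smul_eq_mul]

lemma lintegral_Ioc_rpow {p s : ℝ} (hp : -1 < p) (hs : 0 < s) :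
    ∫⁻ r in Ioc (0:ℝ) s, ENNReal.ofReal (r ^ p) = ENNReal.ofReal (s ^ (p + 1) / (p + 1)) := by
  rw [← ofReal_integral_eq_lintegral_ofReal]
  · rw [← intervalIntegral.integral_of_le hs.le, integral_rpow (Or.inl hp),
      Real.zero_rpow (by linarith), sub_zero]
  · exact (intervalIntegrable_iff_integrableOn_Ioc_of_le hs.le).1
      (intervalIntegral.intervalIntegrable_rpow' hp)
  · exact (ae_restrict_iff' measurableSet_Ioc).2
      (ae_of_all _ fun r hr => Real.rpow_nonneg hr.1.le p)

lemma lintegral_enorm_div_mul_rpow_eq_ofReal_integral {Φ : ℝ → ℝ} {c : ℝ}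
    (hΦ0 : ∀ t, 0 < t → 0 ≤ Φ t) (hΦ : IntegrableOn (fun t => Φ t * t ^ (-1 - c)) (Ioi 0)) :
    ∫⁻ t in Ioi 0, ‖Φ t / t‖ₑ * ENNReal.ofReal t ^ (-c)
      = ENNReal.ofReal (∫ t in Ioi 0, Φ t * t ^ (-1 - c)) := by
  rw [ofReal_integral_eq_lintegral_ofReal hΦ ((ae_restrict_iff' measurableSet_Ioi).2
    (ae_of_all _ fun t ht => mul_nonneg (hΦ0 t ht) (Real.rpow_nonneg (le_of_lt ht) _)))]
  refine setLIntegral_congr_fun measurableSet_Ioi fun t (ht : 0 < t) => ?_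
  rw [Real.enorm_eq_ofReal (div_nonneg (hΦ0 t ht) ht.le), ENNReal.ofReal_rpow_of_pos ht,
    ← ENNReal.ofReal_mul (div_nonneg (hΦ0 t ht) ht.le), sub_eq_add_neg, Real.rpow_add ht,
    Real.rpow_neg_one, div_eq_mul_inv, mul_assoc]

theorem lintegral_mul_le_weighted_Lp_mul_Lq {α : Type*} [MeasurableSpace α] {μ : Measure α}
    {p q : ℝ} (hpq : p.HolderConjugate q) {a h k : α → ℝ≥0∞} (ha : AEMeasurable a μ)
    (hh : AEMeasurable h μ) (hk : AEMeasurable k μ) (hk0 : ∀ᵐ x ∂μ, k x ≠ 0)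
    (hktop : ∀ᵐ x ∂μ, k x ≠ ∞) :
    ∫⁻ x, a x * h x ∂μ
      ≤ (∫⁻ x, a x * k x ∂μ) ^ (1/p) * (∫⁻ x, a x * k x ^ (1 - q) * h x ^ q ∂μ) ^ (1/q) := by
  have hp := hpq.pos
  have hq := hpq.symm.pos
  have hsplit : ∀ᵐ x ∂μ, a x * h x
      = (a x * k x) ^ (1/p) * (a x * k x ^ (1 - q) * h x ^ q) ^ (1/q) := by
    filter_upwards [hk0, hktop] with x hx0 hxtop
    have hexp : 1/p + (1 - q) * (1/q) = 0 := by
      have := hpq.inv_add_inv_eq_one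
      field_simp at this ⊢
      linarith
    rw [ENNReal.mul_rpow_of_nonneg _ _ (by positivity),
      ENNReal.mul_rpow_of_nonneg _ _ (by positivity),
      ENNReal.mul_rpow_of_nonneg _ _ (by positivity), ← ENNReal.rpow_mul, ← ENNReal.rpow_mul (h x),
      mul_one_div_cancel hq.ne', ENNReal.rpow_one]
    calc a x * h x = (a x ^ (1/p) * a x ^ (1/q)) * k x ^ (1/p + (1 - q) * (1/q)) * h x := by
          rw [← ENNReal.rpow_add_of_nonneg _ _ (by positivity) (by positivity),
            hpq.one_div_add_one_div, hexp]
          simp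
      _ = _ := by rw [ENNReal.rpow_add _ _ hx0 hxtop]; ring
  have hpow : ∀ {f : α → ℝ≥0∞} {r : ℝ}, 0 < r → (fun x => (f x ^ (1/r)) ^ r) = f := fun hr => by
    funext x; rw [← ENNReal.rpow_mul, one_div_mul_cancel hr.ne', ENNReal.rpow_one]
  calc ∫⁻ x, a x * h x ∂μ
      = ∫⁻ x, (a x * k x) ^ (1/p) * (a x * k x ^ (1 - q) * h x ^ q) ^ (1/q) ∂μ :=
        lintegral_congr_ae hsplit
    _ ≤ _ := by
        have := ENNReal.lintegral_mul_le_Lp_mul_Lq μ hpq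
          (f := fun x => (a x * k x) ^ (1/p))
          (g := fun x => (a x * k x ^ (1 - q) * h x ^ q) ^ (1/q))
          (by fun_prop) (by fun_prop)
        rwa [hpow hp, hpow hq] at this

theorem enorm_integral_smul_mul_le {α : Type*} [MeasurableSpace α] {μ : Measure α} {p q : ℝ}
    (hpq : p.HolderConjugate q) (c : ℝ) {Ω g : α → ℂ} (hΩ : AEMeasurable Ω μ)
    (hg : AEMeasurable g μ) :
    ‖∫ y, c • (Ω y * g y) ∂μ‖ₑ
      ≤ ‖c‖ₑ * (eLpNorm Ω (ENNReal.ofReal p) μ * (∫⁻ y, ‖g y‖ₑ ^ q ∂μ) ^ (1/q)) := by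
  calc ‖∫ y, c • (Ω y * g y) ∂μ‖ₑ ≤ ∫⁻ y, ‖c • (Ω y * g y)‖ₑ ∂μ :=
        enorm_integral_le_lintegral_enorm _
    _ = ‖c‖ₑ * ∫⁻ y, ‖Ω y‖ₑ * ‖g y‖ₑ ∂μ := by
        simp only [enorm_smul, enorm_mul]
        exact lintegral_const_mul' _ _ enorm_ne_top
    _ ≤ ‖c‖ₑ * (eLpNorm Ω (ENNReal.ofReal p) μ * (∫⁻ y, ‖g y‖ₑ ^ q ∂μ) ^ (1/q)) := by
        rw [eLpNorm_eq_lintegral_rpow_enorm_toReal (by simpa using hpq.pos) ENNReal.ofReal_ne_top,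
          ENNReal.toReal_ofReal hpq.nonneg]
        gcongr
        exact ENNReal.lintegral_mul_le_Lp_mul_Lq μ hpq hΩ.enorm hg.enorm

/-- `ω(B_R)` for the weight `ω = |x|_h^γ`. -/
def weightedVolume (n : ℕ) (γ R : ℝ) : ℝ≥0∞ :=
  ∫⁻ x in hball n R, ENNReal.ofReal (hnorm n x ^ γ)

lemma ofReal_norm_rpow_mul (z : ℂ) (a : ℝ) {q : ℝ} (hq : 0 ≤ q) :
    ENNReal.ofReal (‖z‖ ^ q * a) = ENNReal.ofReal a * ‖z‖ₑ ^ q := by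
  rw [ENNReal.ofReal_mul (by positivity), mul_comm,
    ← ENNReal.ofReal_rpow_of_nonneg (norm_nonneg z) hq, ofReal_norm]

lemma setLIntegral_hball_le_morreyNorm {n : ℕ} {q γ lam R : ℝ} (hq : 0 < q) (hR : 0 < R)
    (h0 : weightedVolume n γ R ≠ 0) (htop : weightedVolume n γ R ≠ ∞)
    (f : (Fin (2*n+1) → ℝ) → ℂ) :
    ∫⁻ x in hball n R, ENNReal.ofReal (hnorm n x ^ γ) * ‖f x‖ₑ ^ q
      ≤ weightedVolume n γ R ^ (1 + lam * q) * morreyNorm n q γ lam f ^ q := by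
  set W := weightedVolume n γ R
  have hquot : (W ^ (-(1 + lam * q)) *
      ∫⁻ x in hball n R, ENNReal.ofReal (‖f x‖ ^ q * hnorm n x ^ γ)) ^ (1/q)
        ≤ morreyNorm n q γ lam f :=
    le_iSup₂ (f := fun (R : ℝ) (_ : 0 < R) =>
      ((∫⁻ x in hball n R, ENNReal.ofReal (hnorm n x ^ γ)) ^ (-(1 + lam * q)) *
        ∫⁻ x in hball n R, ENNReal.ofReal (‖f x‖ ^ q * hnorm n x ^ γ)) ^ (1/q)) R hR
  rw [one_div, ENNReal.rpow_inv_le_iff hq] at hquot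
  simp only [fun x => ofReal_norm_rpow_mul (f x) (hnorm n x ^ γ) hq.le] at hquot
  calc ∫⁻ x in hball n R, ENNReal.ofReal (hnorm n x ^ γ) * ‖f x‖ₑ ^ q
      = W ^ (1 + lam * q) * (W ^ (-(1 + lam * q)) *
          ∫⁻ x in hball n R, ENNReal.ofReal (hnorm n x ^ γ) * ‖f x‖ₑ ^ q) := by
        rw [← mul_assoc, ← ENNReal.rpow_add _ _ h0 htop, add_neg_cancel, ENNReal.rpow_zero,
          one_mul]
    _ ≤ W ^ (1 + lam * q) * morreyNorm n q γ lam f ^ q := by gcongr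

def sphereLIntegral (n : ℕ) (σ : Measure (Fin (2*n+1) → ℝ)) (q : ℝ)
    (f : (Fin (2*n+1) → ℝ) → ℂ) (s : ℝ) : ℝ≥0∞ :=
  ∫⁻ y, ‖f (dil n s y)‖ₑ ^ q ∂σ

section SphereLIntegral

variable {n : ℕ} {σ : Measure (Fin (2*n+1) → ℝ)}

lemma measurable_sphereLIntegral [SFinite σ] (q : ℝ) {f : (Fin (2*n+1) → ℝ) → ℂ}
    (hf : Measurable f) : Measurable (sphereLIntegral n σ q f) :=
  measurable_lintegral_dil (hf.enorm.pow_const q)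

lemma measurable_sphereLIntegral_div [SFinite σ] (q : ℝ) {f : (Fin (2*n+1) → ℝ) → ℂ}
    (hf : Measurable f) :
    Measurable fun p : (Fin (2*n+1) → ℝ) × ℝ => sphereLIntegral n σ q f (hnorm n p.1 / p.2) := by
  have := measurable_sphereLIntegral (σ := σ) q hf
  fun_prop

theorem enorm_roughHausdorff_le [SFinite σ] {p q : ℝ} (hpq : p.HolderConjugate q) (c : ℝ)
    {Φ : ℝ → ℝ} (hΦ : Measurable Φ) {Ω : (Fin (2*n+1) → ℝ) → ℂ} (hΩ : AEMeasurable Ω σ)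
    {f : (Fin (2*n+1) → ℝ) → ℂ} (hf : Measurable f) (x : Fin (2*n+1) → ℝ) :
    ‖roughHausdorff n Φ Ω σ f x‖ₑ
      ≤ eLpNorm Ω (ENNReal.ofReal p) σ
        * (∫⁻ t in Ioi 0, ‖Φ t / t‖ₑ * ENNReal.ofReal t ^ (-c)) ^ (1/p)
        * (∫⁻ t in Ioi 0, ‖Φ t / t‖ₑ * (ENNReal.ofReal t ^ (-c)) ^ (1 - q)
            * sphereLIntegral n σ q f (hnorm n x / t)) ^ (1/q) := by
  have hq := hpq.symm.pos
  have hG : Measurable fun t => sphereLIntegral n σ q f (hnorm n x / t) :=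
    (measurable_sphereLIntegral q hf).comp (measurable_const.div measurable_id)
  have hk : ∀ᵐ t ∂(volume.restrict (Ioi (0:ℝ))), ENNReal.ofReal t ^ (-c) ≠ 0 := by
    refine (ae_restrict_iff' measurableSet_Ioi).2 (ae_of_all _ fun t ht => ?_)
    exact (ENNReal.rpow_pos (ENNReal.ofReal_pos.2 ht) ENNReal.ofReal_ne_top).ne'
  have hktop : ∀ᵐ t ∂(volume.restrict (Ioi (0:ℝ))), ENNReal.ofReal t ^ (-c) ≠ ∞ := by
    refine (ae_restrict_iff' measurableSet_Ioi).2 (ae_of_all _ fun t ht => ?_)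
    exact ENNReal.rpow_ne_top_of_nonneg' (ENNReal.ofReal_pos.2 ht) ENNReal.ofReal_ne_top
  have hHolder := lintegral_mul_le_weighted_Lp_mul_Lq hpq (μ := volume.restrict (Ioi (0:ℝ)))
    (a := fun t => ‖Φ t / t‖ₑ) (k := fun t => ENNReal.ofReal t ^ (-c))
    (h := fun t => sphereLIntegral n σ q f (hnorm n x / t) ^ (1/q))
    (hΦ.div measurable_id).enorm.aemeasurable (hG.pow_const _).aemeasurable
    (measurable_id.ennreal_ofReal.pow_const _).aemeasurable hk hktop
  have hGq : ∀ t, (sphereLIntegral n σ q f (hnorm n x / t) ^ (1/q)) ^ q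
      = sphereLIntegral n σ q f (hnorm n x / t) := fun t => by
    rw [← ENNReal.rpow_mul, one_div_mul_cancel hq.ne', ENNReal.rpow_one]
  simp only [hGq] at hHolder
  calc ‖roughHausdorff n Φ Ω σ f x‖ₑ
      ≤ ∫⁻ t in Ioi 0, ‖∫ y, (Φ t / t) • (Ω y * f (dil n (hnorm n x / t) y)) ∂σ‖ₑ :=
        enorm_integral_le_lintegral_enorm _
    _ ≤ ∫⁻ t in Ioi 0, ‖Φ t / t‖ₑ * (eLpNorm Ω (ENNReal.ofReal p) σ
          * sphereLIntegral n σ q f (hnorm n x / t) ^ (1/q)) :=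
        lintegral_mono fun t => enorm_integral_smul_mul_le hpq _ hΩ
          (hf.comp (measurable_dil n _)).aemeasurable
    _ = eLpNorm Ω (ENNReal.ofReal p) σ
          * ∫⁻ t in Ioi 0, ‖Φ t / t‖ₑ * sphereLIntegral n σ q f (hnorm n x / t) ^ (1/q) := by
        rw [← lintegral_const_mul
          (f := fun t => ‖Φ t / t‖ₑ * sphereLIntegral n σ q f (hnorm n x / t) ^ (1/q))
          _ ((hΦ.div measurable_id).enorm.mul (hG.pow_const _))]
        simp only [mul_left_comm]
    _ ≤ _ := by rw [mul_assoc]; exact mul_le_mul_right hHolder _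

end SphereLIntegral

/-- Polar coordinates `dx = r^{Q-1} dr dσ`, with `σ` carried by the unit sphere `S_{Q-1}`. -/
structure IsPolarMeasure (n : ℕ) (σ : Measure (Fin (2*n+1) → ℝ)) : Prop where
  ae_hnorm_eq_one : ∀ᵐ y ∂σ, hnorm n y = 1
  lintegral_eq : ∀ g : (Fin (2*n+1) → ℝ) → ℝ≥0∞, Measurable g →
    ∫⁻ x, g x = ∫⁻ r in Ioi (0:ℝ), (∫⁻ y, g (dil n r y) ∂σ) * ENNReal.ofReal (r ^ (2*n+1))

namespace IsPolarMeasure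

variable {n : ℕ} {σ : Measure (Fin (2*n+1) → ℝ)}

theorem lintegral_radial_mul (hσ : IsPolarMeasure n σ) {F : ℝ → ℝ≥0∞} (hF : Measurable F)
    {G : (Fin (2*n+1) → ℝ) → ℝ≥0∞} (hG : Measurable G) :
    ∫⁻ x, F (hnorm n x) * G x
      = ∫⁻ r in Ioi 0, F r * (∫⁻ y, G (dil n r y) ∂σ) * ENNReal.ofReal (r ^ (2*n+1)) := by
  rw [hσ.lintegral_eq (fun x => F (hnorm n x) * G x) ((hF.comp (measurable_hnorm n)).mul hG)]
  refine setLIntegral_congr_fun measurableSet_Ioi fun r hr => ?_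
  have hsphere : ∀ᵐ y ∂σ, F (hnorm n (dil n r y)) * G (dil n r y) = F r * G (dil n r y) := by
    filter_upwards [hσ.ae_hnorm_eq_one] with y hy
    rw [hnorm_dil n (le_of_lt hr), hy, mul_one]
  rw [lintegral_congr_ae hsphere, lintegral_const_mul (f := fun y => G (dil n r y)) _
    (hG.comp (measurable_dil n r))]

theorem lintegral_radial_mul_sphere (hσ : IsPolarMeasure n σ) [SFinite σ] {F : ℝ → ℝ≥0∞}
    (hF : Measurable F) {G : (Fin (2*n+1) → ℝ) → ℝ≥0∞} (hG : Measurable G) :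
    ∫⁻ x, F (hnorm n x) * ∫⁻ y, G (dil n (hnorm n x) y) ∂σ
      = σ univ * ∫⁻ x, F (hnorm n x) * G x := by
  have hG' := measurable_lintegral_dil (σ := σ) hG
  rw [hσ.lintegral_radial_mul hF (G := fun x => ∫⁻ y, G (dil n (hnorm n x) y) ∂σ)
      (hG'.comp (measurable_hnorm n)), hσ.lintegral_radial_mul hF hG,
    ← lintegral_const_mul (σ univ)
      (f := fun r => F r * (∫⁻ y, G (dil n r y) ∂σ) * ENNReal.ofReal (r ^ (2*n+1)))
      (by fun_prop)]
  refine setLIntegral_congr_fun measurableSet_Ioi fun r hr => ?_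
  have hsphere : ∀ᵐ z ∂σ, ∫⁻ y, G (dil n (hnorm n (dil n r z)) y) ∂σ = ∫⁻ y, G (dil n r y) ∂σ := by
    filter_upwards [hσ.ae_hnorm_eq_one] with z hz
    rw [hnorm_dil n (le_of_lt hr), hz, mul_one]
  rw [lintegral_congr_ae hsphere, lintegral_const]
  ring

theorem lintegral_comp_dil (hσ : IsPolarMeasure n σ) {g : (Fin (2*n+1) → ℝ) → ℝ≥0∞}
    (hg : Measurable g) {t : ℝ} (ht : 0 < t) :
    ENNReal.ofReal (t ^ (2*n+2)) * ∫⁻ x, g (dil n t x) = ∫⁻ x, g x := by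
  set K : ℝ → ℝ≥0∞ := fun s => (∫⁻ y, g (dil n s y) ∂σ) * ENNReal.ofReal (s ^ (2*n+1))
  have hK : ∀ r, ENNReal.ofReal (t ^ (2*n+1)) * ((∫⁻ y, g (dil n t (dil n r y)) ∂σ)
      * ENNReal.ofReal (r ^ (2*n+1))) = K (t * r) := fun r => by
    simp only [K, dil_dil, mul_pow, ENNReal.ofReal_mul (pow_nonneg ht.le _)]
    ring
  rw [hσ.lintegral_eq (fun x => g (dil n t x)) (hg.comp (measurable_dil n t)), hσ.lintegral_eq g hg,
    pow_succ', ENNReal.ofReal_mul ht.le, mul_assoc,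
    ← lintegral_const_mul' _ _ ENNReal.ofReal_ne_top]
  simp only [hK]
  rw [setLIntegral_Ioi_comp_mul_left ht, ← mul_assoc, ← ENNReal.ofReal_mul ht.le,
    mul_inv_cancel₀ ht.ne', ENNReal.ofReal_one, one_mul]

theorem weightedVolume_eq (hσ : IsPolarMeasure n σ) {γ : ℝ} (hγ : -(2*(n:ℝ)+2) < γ) {s : ℝ}
    (hs : 0 < s) :
    weightedVolume n γ s = σ univ * ENNReal.ofReal (s ^ (2*(n:ℝ)+2+γ) / (2*(n:ℝ)+2+γ)) := by
  set w : ℝ → ℝ≥0∞ := fun r => ENNReal.ofReal (r ^ γ)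
  have hw : Measurable w := by fun_prop
  have hradial : ∀ r ∈ Ioi (0:ℝ),
      (Iic s).indicator w r * (∫⁻ _, 1 ∂σ) * ENNReal.ofReal (r ^ (2*n+1))
      = (Iic s).indicator (fun r => σ univ * ENNReal.ofReal (r ^ (γ + (2*n+1)))) r := by
    intro r hr
    by_cases hrs : r ≤ s
    · simp only [indicator_of_mem (show r ∈ Iic s from hrs), w, lintegral_one]
      rw [Real.rpow_add hr, ENNReal.ofReal_mul (Real.rpow_nonneg (le_of_lt hr) _),
        ← Real.rpow_natCast]
      push_cast; ring
    · simp [indicator_of_notMem (show r ∉ Iic s from hrs)]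
  calc weightedVolume n γ s = ∫⁻ x, (Iic s).indicator w (hnorm n x) * 1 := by
        rw [← setLIntegral_hball_eq_lintegral_indicator]; simp [weightedVolume, w]
    _ = σ univ * ∫⁻ r in Ioc 0 s, ENNReal.ofReal (r ^ (γ + (2*n+1))) := by
        rw [hσ.lintegral_radial_mul (hw.indicator measurableSet_Iic) measurable_const,
          setLIntegral_congr_fun measurableSet_Ioi hradial, lintegral_indicator measurableSet_Iic,
          Measure.restrict_restrict measurableSet_Iic, Iic_inter_Ioi,
          lintegral_const_mul _ (by fun_prop)]
    _ = σ univ * ENNReal.ofReal (s ^ (2*(n:ℝ)+2+γ) / (2*(n:ℝ)+2+γ)) := by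
        rw [lintegral_Ioc_rpow (by linarith) hs]; ring_nf

theorem volume_hball_one_eq (hσ : IsPolarMeasure n σ) :
    volume (hball n 1) = σ univ * ENNReal.ofReal (1 / (2*(n:ℝ)+2)) := by
  have h := hσ.weightedVolume_eq (γ := 0) (by linarith [(n.cast_nonneg : (0:ℝ) ≤ n)]) one_pos
  simpa [weightedVolume] using h

theorem measure_univ_ne_zero (hσ : IsPolarMeasure n σ) : σ univ ≠ 0 := fun h =>
  volume_hball_one_ne_zero n (by rw [hσ.volume_hball_one_eq, h, zero_mul])

theorem isFiniteMeasure (hσ : IsPolarMeasure n σ) : IsFiniteMeasure σ := by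
  refine ⟨lt_top_iff_ne_top.2 fun h => volume_hball_one_ne_top n ?_⟩
  rw [hσ.volume_hball_one_eq, h, ENNReal.top_mul (ENNReal.ofReal_pos.2 (by positivity)).ne']

theorem weightedVolume_ne_zero (hσ : IsPolarMeasure n σ) {γ : ℝ} (hγ : -(2*(n:ℝ)+2) < γ) {R : ℝ}
    (hR : 0 < R) : weightedVolume n γ R ≠ 0 := by
  rw [hσ.weightedVolume_eq hγ hR]
  exact mul_ne_zero hσ.measure_univ_ne_zero
    (ENNReal.ofReal_pos.2 (div_pos (Real.rpow_pos_of_pos hR _) (by linarith))).ne'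

theorem weightedVolume_ne_top (hσ : IsPolarMeasure n σ) [IsFiniteMeasure σ] {γ : ℝ}
    (hγ : -(2*(n:ℝ)+2) < γ) {R : ℝ} (hR : 0 < R) : weightedVolume n γ R ≠ ∞ := by
  rw [hσ.weightedVolume_eq hγ hR]
  exact ENNReal.mul_ne_top (measure_ne_top σ univ) ENNReal.ofReal_ne_top

theorem weightedVolume_div (hσ : IsPolarMeasure n σ) {γ : ℝ} (hγ : -(2*(n:ℝ)+2) < γ) {R t : ℝ}
    (hR : 0 < R) (ht : 0 < t) :
    weightedVolume n γ (R / t) = ENNReal.ofReal t ^ (-(2*(n:ℝ)+2+γ)) * weightedVolume n γ R := by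
  rw [hσ.weightedVolume_eq hγ hR, hσ.weightedVolume_eq hγ (div_pos hR ht),
    Real.div_rpow hR.le ht.le, ENNReal.ofReal_rpow_of_pos ht, mul_left_comm,
    ← ENNReal.ofReal_mul (by positivity), Real.rpow_neg ht.le]
  congr 2
  ring

/-- Averaging over spheres turns `G(|x|/t)` into `σ(S) |f(δ_{1/t} x)|^q`; the dilation `δ_t` then
maps `B_{R/t}` onto `B_R`. -/
theorem setLIntegral_hball_sphereLIntegral_div (hσ : IsPolarMeasure n σ) [SFinite σ]
    {q γ : ℝ} {f : (Fin (2*n+1) → ℝ) → ℂ} (hf : Measurable f) {t : ℝ} (ht : 0 < t) (R : ℝ) :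
    ∫⁻ x in hball n R, ENNReal.ofReal (hnorm n x ^ γ) * sphereLIntegral n σ q f (hnorm n x / t)
      = σ univ * ENNReal.ofReal t ^ (2*(n:ℝ)+2+γ)
          * ∫⁻ x in hball n (R / t), ENNReal.ofReal (hnorm n x ^ γ) * ‖f x‖ₑ ^ q := by
  set w : ℝ → ℝ≥0∞ := fun r => ENNReal.ofReal (r ^ γ)
  have hw : Measurable ((Iic R).indicator w) :=
    (by fun_prop : Measurable w).indicator measurableSet_Iic
  have hg : Measurable fun x => ‖f (dil n t⁻¹ x)‖ₑ ^ q :=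
    (hf.comp (measurable_dil n _)).enorm.pow_const q
  have hscale : ∀ x, (Iic R).indicator w (hnorm n (dil n t x))
      = ENNReal.ofReal t ^ γ * (Iic (R / t)).indicator w (hnorm n x) := fun x => by
    have hmem : t * hnorm n x ∈ Iic R ↔ hnorm n x ∈ Iic (R / t) := by
      simp only [mem_Iic, le_div_iff₀' ht]
    rw [hnorm_dil n ht.le]
    by_cases hx : hnorm n x ∈ Iic (R / t)
    · simp only [indicator_of_mem (hmem.2 hx), indicator_of_mem hx, w]
      rw [ENNReal.ofReal_rpow_of_pos ht,
        ← ENNReal.ofReal_mul (by positivity), Real.mul_rpow ht.le (hnorm_nonneg n x)]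
    · rw [indicator_of_notMem (mt hmem.1 hx), indicator_of_notMem hx, mul_zero]
  have hpow : ENNReal.ofReal (t ^ (2*n+2)) * ENNReal.ofReal t ^ γ
      = ENNReal.ofReal t ^ (2*(n:ℝ)+2+γ) := by
    rw [ENNReal.ofReal_pow ht.le, ← ENNReal.rpow_natCast,
      ← ENNReal.rpow_add _ _ (ENNReal.ofReal_pos.2 ht).ne' ENNReal.ofReal_ne_top]
    push_cast; rfl
  calc ∫⁻ x in hball n R, ENNReal.ofReal (hnorm n x ^ γ) * sphereLIntegral n σ q f (hnorm n x / t)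
      = ∫⁻ x, (Iic R).indicator w (hnorm n x)
          * ∫⁻ y, ‖f (dil n t⁻¹ (dil n (hnorm n x) y))‖ₑ ^ q ∂σ := by
        rw [setLIntegral_hball_eq_lintegral_indicator n R w]
        simp only [sphereLIntegral, dil_dil, div_eq_inv_mul, w]
    _ = σ univ * ∫⁻ x, (Iic R).indicator w (hnorm n x) * ‖f (dil n t⁻¹ x)‖ₑ ^ q :=
        hσ.lintegral_radial_mul_sphere hw hg
    _ = σ univ * (ENNReal.ofReal (t ^ (2*n+2)) * ∫⁻ x, (Iic R).indicator w (hnorm n (dil n t x))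
          * ‖f (dil n t⁻¹ (dil n t x))‖ₑ ^ q) := by
        rw [hσ.lintegral_comp_dil (g := fun x => (Iic R).indicator w (hnorm n x)
          * ‖f (dil n t⁻¹ x)‖ₑ ^ q) ((hw.comp (measurable_hnorm n)).mul hg) ht]
    _ = σ univ * ENNReal.ofReal t ^ (2*(n:ℝ)+2+γ)
          * ∫⁻ x in hball n (R / t), ENNReal.ofReal (hnorm n x ^ γ) * ‖f x‖ₑ ^ q := by
        simp only [hscale, dil_dil, inv_mul_cancel₀ ht.ne', dil_one, mul_assoc]
        rw [lintegral_const_mul' _ _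
            (ENNReal.rpow_ne_top_of_nonneg' (ENNReal.ofReal_pos.2 ht) ENNReal.ofReal_ne_top),
          ← hpow, setLIntegral_hball_eq_lintegral_indicator n (R / t) w]
        ring

theorem setLIntegral_hball_sphereLIntegral_div_le (hσ : IsPolarMeasure n σ) [IsFiniteMeasure σ]
    {q γ lam R t : ℝ} (hq : 0 < q) (hγ : -(2*(n:ℝ)+2) < γ) (hR : 0 < R) (ht : 0 < t)
    {f : (Fin (2*n+1) → ℝ) → ℂ} (hf : Measurable f) :
    ∫⁻ x in hball n R, ENNReal.ofReal (hnorm n x ^ γ) * sphereLIntegral n σ q f (hnorm n x / t)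
      ≤ σ univ * weightedVolume n γ R ^ (1 + lam * q) * morreyNorm n q γ lam f ^ q
        * ENNReal.ofReal t ^ ((2*(n:ℝ)+2+γ) - (2*(n:ℝ)+2+γ) * (1 + lam * q)) := by
  have ht0 : ENNReal.ofReal t ≠ 0 := (ENNReal.ofReal_pos.2 ht).ne'
  rw [hσ.setLIntegral_hball_sphereLIntegral_div hf ht]
  calc σ univ * ENNReal.ofReal t ^ (2*(n:ℝ)+2+γ)
        * ∫⁻ x in hball n (R / t), ENNReal.ofReal (hnorm n x ^ γ) * ‖f x‖ₑ ^ q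
      ≤ σ univ * ENNReal.ofReal t ^ (2*(n:ℝ)+2+γ)
        * (weightedVolume n γ (R / t) ^ (1 + lam * q) * morreyNorm n q γ lam f ^ q) := by
        gcongr
        exact setLIntegral_hball_le_morreyNorm hq (div_pos hR ht)
          (hσ.weightedVolume_ne_zero hγ (div_pos hR ht))
          (hσ.weightedVolume_ne_top hγ (div_pos hR ht)) f
    _ = _ := by
        rw [hσ.weightedVolume_div hγ hR ht,
          ENNReal.mul_rpow_of_ne_top (ENNReal.rpow_ne_top_of_ne_zero ht0 ENNReal.ofReal_ne_top)
            (hσ.weightedVolume_ne_top hγ hR), ← ENNReal.rpow_mul, sub_eq_add_neg,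
          ENNReal.rpow_add (2*(n:ℝ)+2+γ) _ ht0 ENNReal.ofReal_ne_top, neg_mul]
        ring

theorem setLIntegral_hball_lintegral_sphereLIntegral_div_le (hσ : IsPolarMeasure n σ)
    [IsFiniteMeasure σ] {q γ lam R : ℝ} (hq : 0 < q) (hγ : -(2*(n:ℝ)+2) < γ) (hR : 0 < R)
    {f : (Fin (2*n+1) → ℝ) → ℂ} (hf : Measurable f) {φ : ℝ → ℝ≥0∞} (hφ : Measurable φ) :
    ∫⁻ x in hball n R, ENNReal.ofReal (hnorm n x ^ γ)
        * ∫⁻ t in Ioi 0, φ t * sphereLIntegral n σ q f (hnorm n x / t)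
      ≤ σ univ * weightedVolume n γ R ^ (1 + lam * q) * morreyNorm n q γ lam f ^ q
        * ∫⁻ t in Ioi 0, φ t
          * ENNReal.ofReal t ^ ((2*(n:ℝ)+2+γ) - (2*(n:ℝ)+2+γ) * (1 + lam * q)) := by
  have hG := measurable_sphereLIntegral (σ := σ) q hf
  have hGdiv := measurable_sphereLIntegral_div (σ := σ) q hf
  calc ∫⁻ x in hball n R, ENNReal.ofReal (hnorm n x ^ γ)
        * ∫⁻ t in Ioi 0, φ t * sphereLIntegral n σ q f (hnorm n x / t)
      = ∫⁻ t in Ioi 0, φ t * ∫⁻ x in hball n R, ENNReal.ofReal (hnorm n x ^ γ)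
          * sphereLIntegral n σ q f (hnorm n x / t) := by
        simp only [← lintegral_const_mul' _ _ ENNReal.ofReal_ne_top]
        rw [lintegral_lintegral_swap (by fun_prop)]
        refine lintegral_congr fun t => ?_
        rw [← lintegral_const_mul (φ t) (f := fun x => ENNReal.ofReal (hnorm n x ^ γ)
          * sphereLIntegral n σ q f (hnorm n x / t)) (by fun_prop)]
        simp only [mul_left_comm]
    _ ≤ ∫⁻ t in Ioi 0, φ t * (σ univ * weightedVolume n γ R ^ (1 + lam * q)
          * morreyNorm n q γ lam f ^ q
          * ENNReal.ofReal t ^ ((2*(n:ℝ)+2+γ) - (2*(n:ℝ)+2+γ) * (1 + lam * q))) := by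
        refine setLIntegral_mono' measurableSet_Ioi fun t ht => ?_
        gcongr
        exact hσ.setLIntegral_hball_sphereLIntegral_div_le hq hγ hR ht hf
    _ = _ := by
        rw [← lintegral_const_mul _ (by fun_prop)]
        simp only [mul_left_comm]

theorem setLIntegral_hball_roughHausdorff_le (hσ : IsPolarMeasure n σ) [IsFiniteMeasure σ]
    {p q γ lam R : ℝ} (hpq : p.HolderConjugate q) (hγ : -(2*(n:ℝ)+2) < γ) (hR : 0 < R)
    {Φ : ℝ → ℝ} (hΦ : Measurable Φ) {Ω : (Fin (2*n+1) → ℝ) → ℂ} (hΩ : AEMeasurable Ω σ)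
    {f : (Fin (2*n+1) → ℝ) → ℂ} (hf : Measurable f) :
    ∫⁻ x in hball n R, ENNReal.ofReal (hnorm n x ^ γ) * ‖roughHausdorff n Φ Ω σ f x‖ₑ ^ q
      ≤ σ univ * (eLpNorm Ω (ENNReal.ofReal p) σ
          * (∫⁻ t in Ioi 0, ‖Φ t / t‖ₑ * ENNReal.ofReal t ^ (-((2*(n:ℝ)+2+γ) * lam)))
          * morreyNorm n q γ lam f) ^ q * weightedVolume n γ R ^ (1 + lam * q) := by
  have hq := hpq.symm.pos
  set c := (2*(n:ℝ)+2+γ) * lam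
  set E := eLpNorm Ω (ENNReal.ofReal p) σ
  set A := ∫⁻ t in Ioi 0, ‖Φ t / t‖ₑ * ENNReal.ofReal t ^ (-c)
  set φ : ℝ → ℝ≥0∞ := fun t => ‖Φ t / t‖ₑ * (ENNReal.ofReal t ^ (-c)) ^ (1 - q)
  set B := fun x => ∫⁻ t in Ioi 0, φ t * sphereLIntegral n σ q f (hnorm n x / t)
  have hφ : Measurable φ := by fun_prop
  have hB : Measurable B :=
    ((hφ.comp measurable_snd).mul (measurable_sphereLIntegral_div q hf)).lintegral_prod_right'
  have hw : Measurable fun x => ENNReal.ofReal (hnorm n x ^ γ) := by fun_prop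
  have hpointwise : ∀ x, ‖roughHausdorff n Φ Ω σ f x‖ₑ ^ q ≤ E ^ q * A ^ (q - 1) * B x := fun x =>
    calc ‖roughHausdorff n Φ Ω σ f x‖ₑ ^ q ≤ (E * A ^ (1/p) * B x ^ (1/q)) ^ q := by
          gcongr; exact enorm_roughHausdorff_le hpq c hΦ hΩ hf x
      _ = E ^ q * A ^ (q - 1) * B x := by
          rw [ENNReal.mul_rpow_of_nonneg _ _ hq.le, ENNReal.mul_rpow_of_nonneg _ _ hq.le,
            ← ENNReal.rpow_mul, ← ENNReal.rpow_mul, one_div_mul_cancel hq.ne', ENNReal.rpow_one,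
            one_div_mul_eq_div, hpq.symm.div_conj_eq_sub_one]
  -- the scaling of `ω(B_{R/t})` turns `φ t` back into `Φ(t)/t · t^{-c}`
  have hA : ∫⁻ t in Ioi 0, φ t
      * ENNReal.ofReal t ^ ((2*(n:ℝ)+2+γ) - (2*(n:ℝ)+2+γ) * (1 + lam * q)) = A := by
    refine setLIntegral_congr_fun measurableSet_Ioi fun t ht => ?_
    have ht0 : ENNReal.ofReal t ≠ 0 := (ENNReal.ofReal_pos.2 ht).ne'
    simp only [φ]
    rw [← ENNReal.rpow_mul, mul_assoc, ← ENNReal.rpow_add _ _ ht0 ENNReal.ofReal_ne_top]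
    congr 3
    ring
  have hAq : A ^ (q - 1) * A = A ^ q := by
    conv_lhs => enter [2]; rw [← ENNReal.rpow_one A]
    rw [← ENNReal.rpow_add_of_nonneg _ _ (sub_nonneg.2 hpq.symm.lt.le) zero_le_one, sub_add_cancel]
  calc ∫⁻ x in hball n R, ENNReal.ofReal (hnorm n x ^ γ) * ‖roughHausdorff n Φ Ω σ f x‖ₑ ^ q
      ≤ ∫⁻ x in hball n R, E ^ q * A ^ (q - 1) * (ENNReal.ofReal (hnorm n x ^ γ) * B x) :=
        lintegral_mono fun x => by
          rw [mul_left_comm]; gcongr; exact hpointwise x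
    _ = E ^ q * A ^ (q - 1) * ∫⁻ x in hball n R, ENNReal.ofReal (hnorm n x ^ γ) * B x :=
        lintegral_const_mul _ (hw.mul hB)
    _ ≤ E ^ q * A ^ (q - 1) * (σ univ * weightedVolume n γ R ^ (1 + lam * q)
          * morreyNorm n q γ lam f ^ q * A) := by
        rw [← hA]
        gcongr
        exact hσ.setLIntegral_hball_lintegral_sphereLIntegral_div_le hpq.symm.pos hγ hR hf hφ
    _ = _ := by
        rw [ENNReal.mul_rpow_of_nonneg _ _ hq.le, ENNReal.mul_rpow_of_nonneg _ _ hq.le, ← hAq]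
        ring

theorem morreyNorm_roughHausdorff_le (hσ : IsPolarMeasure n σ) [IsFiniteMeasure σ]
    {p q γ lam : ℝ} (hpq : p.HolderConjugate q) (hγ : -(2*(n:ℝ)+2) < γ)
    {Φ : ℝ → ℝ} (hΦ : Measurable Φ) {Ω : (Fin (2*n+1) → ℝ) → ℂ}
    (hΩ : AEMeasurable Ω σ) {f : (Fin (2*n+1) → ℝ) → ℂ} (hf : Measurable f) :
    morreyNorm n q γ lam (roughHausdorff n Φ Ω σ f)
      ≤ σ univ ^ (1/q) * (eLpNorm Ω (ENNReal.ofReal p) σ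
        * (∫⁻ t in Ioi 0, ‖Φ t / t‖ₑ * ENNReal.ofReal t ^ (-((2*(n:ℝ)+2+γ) * lam)))
        * morreyNorm n q γ lam f) := by
  have hq := hpq.symm.pos
  refine iSup₂_le fun R hR => ?_
  have h0 := hσ.weightedVolume_ne_zero hγ hR
  have htop := hσ.weightedVolume_ne_top hγ hR
  change (weightedVolume n γ R ^ (-(1 + lam * q)) * _) ^ (1/q) ≤ _
  simp only [fun x => ofReal_norm_rpow_mul (roughHausdorff n Φ Ω σ f x) (hnorm n x ^ γ) hq.le]
  rw [one_div, ENNReal.rpow_inv_le_iff hq]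
  calc weightedVolume n γ R ^ (-(1 + lam * q)) * ∫⁻ x in hball n R,
        ENNReal.ofReal (hnorm n x ^ γ) * ‖roughHausdorff n Φ Ω σ f x‖ₑ ^ q
      ≤ weightedVolume n γ R ^ (-(1 + lam * q)) * (σ univ * (eLpNorm Ω (ENNReal.ofReal p) σ
          * (∫⁻ t in Ioi 0, ‖Φ t / t‖ₑ * ENNReal.ofReal t ^ (-((2*(n:ℝ)+2+γ) * lam)))
          * morreyNorm n q γ lam f) ^ q * weightedVolume n γ R ^ (1 + lam * q)) := by
        gcongr
        exact hσ.setLIntegral_hball_roughHausdorff_le hpq hγ hR hΦ hΩ hf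
    _ = _ := by
        rw [ENNReal.mul_rpow_of_nonneg (σ univ ^ q⁻¹) _ hq.le, ← ENNReal.rpow_mul,
          inv_mul_cancel₀ hq.ne', ENNReal.rpow_one, mul_comm, mul_assoc,
          ← ENNReal.rpow_add _ _ h0 htop, add_neg_cancel, ENNReal.rpow_zero, mul_one]

end IsPolarMeasure

theorem roughHausdorff_centralMorrey_bounded_general (n : ℕ) (q γ lam : ℝ) (hq : 1 < q)
    (hγ : -(2*(n:ℝ)+2) < γ)
    (σ : Measure (Fin (2*n+1) → ℝ))
    (hσ : ∀ᵐ y ∂σ, hnorm n y = 1)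
    (hpolar : ∀ g : (Fin (2*n+1) → ℝ) → ℝ≥0∞, Measurable g →
      ∫⁻ x, g x = ∫⁻ r in Ioi (0:ℝ),
        (∫⁻ y, g (dil n r y) ∂σ) * ENNReal.ofReal (r ^ (2*n+1)))
    (Φ : ℝ → ℝ) (hΦm : Measurable Φ) (hΦ0 : ∀ t, 0 ≤ Φ t)
    (hC1 : IntegrableOn (fun t => Φ t * t ^ (-1 - ((2*(n:ℝ)+2) + γ) * lam)) (Ioi 0))
    (Ω : (Fin (2*n+1) → ℝ) → ℂ)
    (hΩ : MemLp Ω (ENNReal.ofReal (q/(q-1))) σ) :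
    ∃ C : ℝ, 0 < C ∧ ∀ f : (Fin (2*n+1) → ℝ) → ℂ, Measurable f →
      morreyNorm n q γ lam (roughHausdorff n Φ Ω σ f) ≤
        ENNReal.ofReal (C * ∫ t in Ioi (0:ℝ), Φ t * t ^ (-1 - ((2*(n:ℝ)+2) + γ) * lam)) *
          eLpNorm Ω (ENNReal.ofReal (q/(q-1))) σ * morreyNorm n q γ lam f := by
  have hpolarσ : IsPolarMeasure n σ := ⟨hσ, hpolar⟩
  have := hpolarσ.isFiniteMeasure
  have hpq : (q/(q-1)).HolderConjugate q := (Real.HolderConjugate.conjExponent hq).symm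
  have hσ0 : σ univ ^ (1/q) ≠ 0 :=
    (ENNReal.rpow_pos (pos_iff_ne_zero.2 hpolarσ.measure_univ_ne_zero) (measure_ne_top _ _)).ne'
  have hσtop : σ univ ^ (1/q) ≠ ∞ :=
    ENNReal.rpow_ne_top_of_nonneg (by positivity) (measure_ne_top _ _)
  refine ⟨(σ univ ^ (1/q)).toReal, ENNReal.toReal_pos hσ0 hσtop, fun f hf => ?_⟩
  rw [ENNReal.ofReal_mul ENNReal.toReal_nonneg, ENNReal.ofReal_toReal hσtop,
    ← lintegral_enorm_div_mul_rpow_eq_ofReal_integral (fun t _ => hΦ0 t) hC1]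
  refine (hpolarσ.morreyNorm_roughHausdorff_le hpq hγ hΦm hΩ.aestronglyMeasurable.aemeasurable
    hf).trans_eq ?_
  ring

/-- sufficiency in Theorem 3.1: if
`C₁ = ∫_0^∞ Φ(t) t^{-1-(Q+γ)λ} dt < ∞` then `H_{Φ,Ω}` is bounded on the weighted
central Morrey space `Ḃ^{q,λ}_ω(Hⁿ)` with operator norm `≲ C₁ ‖Ω‖_{L^{q'}(S_{Q-1})}`. -/
theorem roughHausdorff_centralMorrey_bounded (n : ℕ) (q γ lam : ℝ) (hq : 1 < q)
    (hγ : -(2*(n:ℝ)+2) < γ) (hlam1 : -(1/q) < lam) (hlam2 : lam < 0)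
    (σ : Measure (Fin (2*n+1) → ℝ))
    (hσ : ∀ᵐ y ∂σ, hnorm n y = 1)
    (hpolar : ∀ g : (Fin (2*n+1) → ℝ) → ℝ≥0∞, Measurable g →
      ∫⁻ x, g x = ∫⁻ r in Ioi (0:ℝ),
        (∫⁻ y, g (dil n r y) ∂σ) * ENNReal.ofReal (r ^ (2*n+1)))
    (Φ : ℝ → ℝ) (hΦm : Measurable Φ) (hΦ0 : ∀ t, 0 ≤ Φ t)
    (hC1 : IntegrableOn (fun t => Φ t * t ^ (-1 - ((2*(n:ℝ)+2) + γ) * lam)) (Ioi 0))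
    (Ω : (Fin (2*n+1) → ℝ) → ℂ) (hΩm : Measurable Ω)
    (hΩ : MemLp Ω (ENNReal.ofReal (q/(q-1))) σ) :
    ∃ C : ℝ, 0 < C ∧ ∀ f : (Fin (2*n+1) → ℝ) → ℂ, Measurable f →
      morreyNorm n q γ lam (roughHausdorff n Φ Ω σ f) ≤
        ENNReal.ofReal (C * ∫ t in Ioi (0:ℝ), Φ t * t ^ (-1 - ((2*(n:ℝ)+2) + γ) * lam)) *
          eLpNorm Ω (ENNReal.ofReal (q/(q-1))) σ * morreyNorm n q γ lam f :=
  roughHausdorff_centralMorrey_bounded_general n q γ lam hq hγ σ hσ hpolar Φ hΦm hΦ0 hC1 Ω hΩ
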